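/- Suppose z ∈ ℂ satisfies Re(E_κⁿ(z)) ≥ Q + 1 for all n ≥ 0. Then there exist an external address s and a real number t ≥ 0 such that (s,t) ∈ Y and 𝔤(s,t) = z; in particular z has external address s, i.e. Im(E_κ^{n−1}(z)) ∈ ((2s_n − 1)π, (2s_n + 1)π) for all n ≥ 1. -/

import Mathlib

open Filter Topology ENNReal

noncomputable section

/-- The space of external addresses: integer sequences (indexed from 0, so index `k`
corresponds to the entry `s_{k+1}` of the paper) with the lexicographic order. -/
abbrev Addr : Type := Lex (ℕ → ℤ)

/-- The shift map `σ` on external addresses. -/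
def shiftA (s : Addr) : Addr := toLex (fun n => ofLex s (n + 1))

/-- The model growth function `F(t) = e^t - 1`. -/
def Fexp (t : ℝ) : ℝ := Real.exp t - 1

/-- The model map `𝓕(s,t) = (σ s, F t - 2π |s₂|)`. -/
def Fmod (p : Addr × ℝ) : Addr × ℝ :=
  (shiftA p.1, Fexp p.2 - 2 * Real.pi * |((ofLex p.1 1 : ℤ) : ℝ)|)

/-- The model set `X̄ = {(s,t) : T(𝓕ⁿ(s,t)) ≥ 0 for all n ≥ 0}`. -/
def Xbar : Set (Addr × ℝ) := {p | ∀ n : ℕ, 0 ≤ (Fmod^[n] p).2}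

/-- The model escaping set `X = {(s,t) ∈ X̄ : T(𝓕ⁿ(s,t)) → ∞}`. -/
def Xset : Set (Addr × ℝ) :=
  {p | p ∈ Xbar ∧ Tendsto (fun n : ℕ => (Fmod^[n] p).2) atTop atTop}

/-- The minimal potential `t_s ∈ [0,∞]` of an address (`∞` if `(s,t) ∉ X̄` for all `t ≥ 0`). -/
def tS (s : Addr) : ℝ≥0∞ :=
  sInf (ENNReal.ofReal '' {t : ℝ | 0 ≤ t ∧ (s, t) ∈ Xbar})

/-- The exponential map `E_κ(z) = e^z + κ`. -/
def Eexp (κ : ℂ) (z : ℂ) : ℂ := Complex.exp z + κ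

/-- The escaping set `I(E_κ)`. -/
def escapingSet (κ : ℂ) : Set ℂ :=
  {z | Tendsto (fun n : ℕ => ‖(Eexp κ)^[n] z‖) atTop atTop}

/-- The order topology induced by the lexicographic order on external addresses. -/
instance : TopologicalSpace Addr := Preorder.topology Addr
instance : OrderTopology Addr := ⟨rfl⟩

/-- The constant `Q(K) = max(log(4(K+π+3)), π+2)`. -/
def Qconst (K : ℝ) : ℝ := max (Real.log (4 * (K + Real.pi + 3))) (Real.pi + 2)

/-- `Y_Q = {(s,t) ∈ X̄ : T(𝓕ⁿ(s,t)) ≥ Q for all n}`. -/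
def Yset (Q : ℝ) : Set (Addr × ℝ) :=
  {p | p ∈ Xbar ∧ ∀ n : ℕ, Q ≤ (Fmod^[n] p).2}

/-- `Z(s,t) = t + 2πi s₁`. -/
def Zc (p : Addr × ℝ) : ℂ :=
  (p.2 : ℂ) + 2 * Real.pi * Complex.I * ((ofLex p.1 0 : ℤ) : ℂ)

/-- The approximating maps `𝔤_k`: `𝔤₀ = Z` and
`𝔤_{k+1}(s,t) = Log(𝔤_k(𝓕(s,t)) - κ) + 2πi s₁`, with `Log` the principal logarithm. -/
def gmap (κ : ℂ) : ℕ → Addr × ℝ → ℂ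
  | 0 => Zc
  | k + 1 => fun p =>
      Complex.log (gmap κ k (Fmod p) - κ) + 2 * Real.pi * Complex.I * ((ofLex p.1 0 : ℤ) : ℂ)

/-!
Let `m_n` be the integer nearest to `Im (E_κⁿ z) / 2π`. As the orbit stays far to the right,
`Re E_κⁿ⁺¹ z ≥ Q + 1` forces `cos (Im E_κⁿ z) ≥ -1/10`, so `Im E_κⁿ z` lies within `π - 1/2` of
`2π m_n` and `Log (E_κⁿ⁺¹ z - κ) = E_κⁿ z - 2πi m_n`. Pulling `Re E_κᵏ z` back along the model
maps `t ↦ F t - 2π |m_{n+1}|` and passing to a limit by compactness gives `t` with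
`|T (𝓕ⁿ (m, t)) - Re E_κⁿ z| ≤ 1` for all `n`, so `(m, t) ∈ Y`. Then `𝔤₀ = Z` is within `π + 1`
of the orbit of `z` along `𝓕ⁿ (m, t)`, and each step of the recursion for `𝔤_k` halves this
error, because there the logarithm is applied far from `0` and from the negative real axis. Hence
`𝔤_k (m, t) → z`.
-/

open Real

lemma abs_sub_two_pi_mul_round_le (x : ℝ) : |x - 2 * π * round (x / (2 * π))| ≤ π := by
  have hx : x - 2 * π * round (x / (2 * π)) = 2 * π * (x / (2 * π) - round (x / (2 * π))) := by
    field_simp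
  rw [hx, abs_mul, abs_of_pos two_pi_pos]
  nlinarith [abs_sub_round (x / (2 * π)), pi_pos]

/-- The margin `1/2` comes from `cos (π - 1/2) = -cos (1/2) ≤ -7/8`. -/
lemma abs_sub_two_pi_mul_round_le_of_neg_tenth_le_cos {x : ℝ} (hx : -(1 / 10) ≤ cos x) :
    |x - 2 * π * round (x / (2 * π))| ≤ π - 1 / 2 := by
  set θ := x - 2 * π * round (x / (2 * π))
  have hcos : cos |θ| = cos x := by
    rw [cos_abs, show θ = x - round (x / (2 * π)) * (2 * π) by ring, cos_sub_int_mul_two_pi]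
  by_contra! h
  have h1 : cos |θ| ≤ cos (π - 1 / 2) :=
    cos_le_cos_of_nonneg_of_le_pi (by linarith [pi_gt_three]) (abs_sub_two_pi_mul_round_le x) h.le
  have h2 : 7 / 8 ≤ cos (1 / 2) := by nlinarith [one_sub_sq_div_two_le_cos (x := 1 / 2)]
  rw [cos_pi_sub, hcos] at h1
  linarith

lemma neg_tenth_le_cos_im {κ w : ℂ} (hre : 0 ≤ (Eexp κ w).re) (hw : 10 * ‖κ‖ ≤ exp w.re) :
    -(1 / 10) ≤ cos w.im := by
  have hexp : (Eexp κ w).re = exp w.re * cos w.im + κ.re := by simp [Eexp, Complex.exp_re]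
  nlinarith [exp_pos w.re, abs_le.1 (Complex.abs_re_le_norm κ)]

lemma log_exp_eq_sub_two_pi_I_mul {w : ℂ} {m : ℤ} (h : |w.im - 2 * π * m| < π) :
    Complex.log (Complex.exp w) = w - 2 * π * Complex.I * m := by
  have hexp : Complex.exp (w - 2 * π * Complex.I * m) = Complex.exp w := by
    rw [Complex.exp_sub, show 2 * π * Complex.I * m = (m : ℂ) * (2 * π * Complex.I) by ring,
      Complex.exp_int_mul_two_pi_mul_I, div_one]
  have him : (w - 2 * π * Complex.I * m).im = w.im - 2 * π * m := by simp
  rw [← hexp, Complex.log_exp] <;> rw [him] <;> linarith [abs_lt.1 h]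

lemma norm_log_add_sub_log_le {b d : ℂ} (hb : |b.arg| ≤ π - 1 / 2) (hd : ‖d‖ ≤ ‖b‖ / 10) :
    ‖Complex.log (b + d) - Complex.log b‖ ≤ 3 / 2 * ‖d‖ / ‖b‖ := by
  rcases eq_or_ne b 0 with rfl | hb0
  · simp_all
  have hbpos : 0 < ‖b‖ := norm_pos_iff.2 hb0
  set u := d / b with hu_def
  have hu : ‖u‖ ≤ 1 / 10 := by
    rw [norm_div, div_le_iff₀ hbpos]; linarith
  have hlog_u : ‖Complex.log (1 + u)‖ ≤ 3 / 2 * ‖u‖ :=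
    Complex.norm_log_one_add_half_le_self (by linarith)
  have hu1 : 1 + u ≠ 0 := by
    intro h
    have : ‖u‖ = 1 := by rw [show u = -1 by linear_combination h]; simp
    linarith
  have harg : |(1 + u).arg| ≤ 3 / 20 := by
    rw [← Complex.log_im]; exact (Complex.abs_im_le_norm _).trans (by linarith)
  have hsplit : Complex.log (b + d) = Complex.log b + Complex.log (1 + u) := by
    rw [show b + d = b * (1 + u) by rw [hu_def, mul_add, mul_one, mul_div_cancel₀ _ hb0]]
    refine (Complex.log_mul_eq_add_log_iff hb0 hu1).2 ⟨?_, ?_⟩ <;>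
      linarith [abs_le.1 hb, abs_le.1 harg, pi_gt_three]
  rw [hsplit, add_sub_cancel_left]
  calc ‖Complex.log (1 + u)‖ ≤ 3 / 2 * ‖u‖ := hlog_u
    _ = 3 / 2 * ‖d‖ / ‖b‖ := by rw [norm_div]; ring

lemma abs_log_sub_log_le_one {a b : ℝ} (ha : 0 < a) (hb : 0 < b) (hab : a ≤ exp 1 * b)
    (hba : b ≤ exp 1 * a) : |log a - log b| ≤ 1 := by
  have h1 := log_le_log ha hab
  have h2 := log_le_log hb hba
  rw [log_mul (exp_ne_zero 1) hb.ne', log_exp] at h1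
  rw [log_mul (exp_ne_zero 1) ha.ne', log_exp] at h2
  rw [abs_le]; constructor <;> linarith

/-- A potential `τ` near `Re ζ`, shifted by `M ≈ |Im ζ|`, is about `|ζ| ≈ |ζ - κ|`; so its
preimage under `σ ↦ F σ - M` is within `1` of `log |ζ - κ|`. -/
lemma exists_Fexp_sub_eq_of_abs_sub_re_le {ζ κ : ℂ} {τ M : ℝ}
    (hζ : 10 * (‖κ‖ + π + 3) ≤ ‖ζ - κ‖) (hre : 0 ≤ ζ.re) (hτ : |τ - ζ.re| ≤ 1)
    (hM : |(|ζ.im| - M)| ≤ π) :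
    ∃ σ, Fexp σ - M = τ ∧ |σ - log ‖ζ - κ‖| ≤ 1 := by
  have hre_im : ‖ζ‖ ≤ ζ.re + |ζ.im| := by
    simpa [abs_of_nonneg hre] using Complex.norm_le_abs_re_add_abs_im ζ
  have hre_im' : ζ.re + |ζ.im| ≤ 2 * ‖ζ‖ := by
    linarith [Complex.re_le_norm ζ, Complex.abs_im_le_norm ζ]
  have hsub : ‖ζ - κ‖ ≤ ‖ζ‖ + ‖κ‖ := norm_sub_le _ _
  have hsub' : ‖ζ‖ ≤ ‖κ‖ + ‖ζ - κ‖ := norm_le_insert' _ _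
  have he := exp_one_gt_d9
  have hlo : 9 / 10 * ‖ζ - κ‖ ≤ 1 + τ + M := by
    linarith [abs_le.1 hτ, abs_le.1 hM, pi_pos, norm_nonneg κ]
  have hhi : 1 + τ + M ≤ 22 / 10 * ‖ζ - κ‖ := by
    linarith [abs_le.1 hτ, abs_le.1 hM, pi_pos, norm_nonneg κ]
  have hpos : 0 < ‖ζ - κ‖ := by linarith [pi_pos, norm_nonneg κ]
  refine ⟨log (1 + τ + M), ?_, abs_log_sub_log_le_one (by linarith) hpos (by nlinarith)
    (by nlinarith)⟩
  rw [Fexp, Real.exp_log (by linarith)]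
  ring

lemma ofLex_Fmod_iterate_fst (p : Addr × ℝ) (n k : ℕ) :
    ofLex (Fmod^[n] p).1 k = ofLex p.1 (k + n) := by
  induction n generalizing k with
  | zero => rfl
  | succ n ih =>
    rw [Function.iterate_succ_apply']
    exact (ih (k + 1)).trans (congrArg _ (by ring))

lemma Fmod_iterate_succ_snd (p : Addr × ℝ) (n : ℕ) :
    (Fmod^[n + 1] p).2 = Fexp (Fmod^[n] p).2 - 2 * π * |((ofLex p.1 (n + 1) : ℤ) : ℝ)| := by
  rw [Function.iterate_succ_apply', Fmod, ofLex_Fmod_iterate_fst, Nat.add_comm 1 n]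

lemma gmap_succ_Fmod_iterate (κ : ℂ) (j n : ℕ) (p : Addr × ℝ) :
    gmap κ (j + 1) (Fmod^[n] p) =
      Complex.log (gmap κ j (Fmod^[n + 1] p) - κ) + 2 * π * Complex.I * (ofLex p.1 n : ℤ) := by
  simp only [gmap, Function.iterate_succ_apply', ofLex_Fmod_iterate_fst, zero_add]

lemma continuous_Fmod_iterate_snd (s : Addr) (n : ℕ) :
    Continuous fun t : ℝ => (Fmod^[n] (s, t)).2 := by
  induction n with
  | zero => exact continuous_snd.comp (Continuous.prodMk_right s)
  | succ n ih =>
    simp only [Fmod_iterate_succ_snd, Fexp]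
    fun_prop

lemma IsCompact.exists_mem_forall_mem_of_forall_le {X : Type*} [TopologicalSpace X] {S : Set X}
    (hS : IsCompact S) {P : ℕ → Set X} (hP : ∀ n, IsClosed (P n))
    (h : ∀ k, ∃ x ∈ S, ∀ n ≤ k, x ∈ P n) : ∃ x ∈ S, ∀ n, x ∈ P n := by
  obtain ⟨x, hxS, hx⟩ := hS.inter_iInter_nonempty P hP fun u => by
    obtain ⟨x, hxS, hx⟩ := h (u.sup id)
    exact ⟨x, hxS, Set.mem_iInter₂.2 fun n hn => hx n (Finset.le_sup (f := id) hn)⟩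
  exact ⟨x, hxS, Set.mem_iInter.1 hx⟩

lemma pi_add_two_le_Qconst (K : ℝ) : π + 2 ≤ Qconst K := le_max_right _ _

section Orbit

variable {κ z : ℂ} {K : ℝ}

def orbitAddr (κ z : ℂ) (n : ℕ) : ℤ := round (((Eexp κ)^[n] z).im / (2 * π))

lemma Eexp_iterate_succ (κ z : ℂ) (n : ℕ) :
    (Eexp κ)^[n + 1] z = Complex.exp ((Eexp κ)^[n] z) + κ :=
  Function.iterate_succ_apply' _ _ _

lemma ten_mul_le_exp_re_orbit (hκ : ‖κ‖ ≤ K)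
    (hz : ∀ n : ℕ, Qconst K + 1 ≤ ((Eexp κ)^[n] z).re) (n : ℕ) :
    10 * (K + π + 3) ≤ exp ((Eexp κ)^[n] z).re := by
  have hpos : 0 < 4 * (K + π + 3) := by linarith [norm_nonneg κ, pi_pos]
  have hQ : 4 * (K + π + 3) ≤ exp (Qconst K) := by
    rw [← Real.exp_log hpos]; exact exp_le_exp.2 (le_max_left _ _)
  calc 10 * (K + π + 3) ≤ exp (Qconst K) * exp 1 := by nlinarith [exp_one_gt_d9]
    _ = exp (Qconst K + 1) := (exp_add _ _).symm
    _ ≤ exp ((Eexp κ)^[n] z).re := exp_le_exp.2 (hz n)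

lemma abs_im_orbit_sub_le (hκ : ‖κ‖ ≤ K) (hz : ∀ n : ℕ, Qconst K + 1 ≤ ((Eexp κ)^[n] z).re)
    (n : ℕ) : |((Eexp κ)^[n] z).im - 2 * π * orbitAddr κ z n| ≤ π - 1 / 2 := by
  refine abs_sub_two_pi_mul_round_le_of_neg_tenth_le_cos (neg_tenth_le_cos_im (κ := κ) ?_ ?_)
  · rw [← Function.iterate_succ_apply' (Eexp κ)]
    linarith [hz (n + 1), pi_add_two_le_Qconst K, pi_pos]
  · linarith [ten_mul_le_exp_re_orbit hκ hz n, pi_pos]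

lemma log_orbit_succ_sub (hκ : ‖κ‖ ≤ K) (hz : ∀ n : ℕ, Qconst K + 1 ≤ ((Eexp κ)^[n] z).re)
    (n : ℕ) : Complex.log ((Eexp κ)^[n + 1] z - κ) =
      (Eexp κ)^[n] z - 2 * π * Complex.I * orbitAddr κ z n := by
  rw [Eexp_iterate_succ, add_sub_cancel_right]
  exact log_exp_eq_sub_two_pi_I_mul (by linarith [abs_im_orbit_sub_le hκ hz n])

lemma exists_potential_close_of_le (hκ : ‖κ‖ ≤ K)
    (hz : ∀ n : ℕ, Qconst K + 1 ≤ ((Eexp κ)^[n] z).re) (k : ℕ) (τ : ℝ)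
    (hτ : |τ - ((Eexp κ)^[k] z).re| ≤ 1) :
    ∃ t, (Fmod^[k] (toLex (orbitAddr κ z), t)).2 = τ ∧
      ∀ n ≤ k, |(Fmod^[n] (toLex (orbitAddr κ z), t)).2 - ((Eexp κ)^[n] z).re| ≤ 1 := by
  induction k generalizing τ with
  | zero => exact ⟨τ, rfl, fun n hn => by rwa [Nat.le_zero.1 hn]⟩
  | succ k ih =>
    have hnorm : ‖(Eexp κ)^[k + 1] z - κ‖ = exp ((Eexp κ)^[k] z).re := by
      rw [Eexp_iterate_succ, add_sub_cancel_right, Complex.norm_exp]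
    have hM : |(|((Eexp κ)^[k + 1] z).im| - 2 * π * |((orbitAddr κ z (k + 1) : ℤ) : ℝ)|)| ≤ π := by
      rw [show 2 * π * |((orbitAddr κ z (k + 1) : ℤ) : ℝ)| = |2 * π * orbitAddr κ z (k + 1)| by
        rw [abs_mul, abs_of_pos two_pi_pos]]
      exact (abs_abs_sub_abs_le_abs_sub _ _).trans (abs_sub_two_pi_mul_round_le _)
    have hbig : 10 * (‖κ‖ + π + 3) ≤ ‖(Eexp κ)^[k + 1] z - κ‖ := by
      linarith [hnorm, ten_mul_le_exp_re_orbit hκ hz k]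
    have hre : 0 ≤ ((Eexp κ)^[k + 1] z).re := by
      linarith [hz (k + 1), pi_add_two_le_Qconst K, pi_pos]
    obtain ⟨σ, hστ, hσ⟩ := exists_Fexp_sub_eq_of_abs_sub_re_le hbig hre hτ hM
    rw [hnorm, Real.log_exp] at hσ
    obtain ⟨t, htσ, ht⟩ := ih σ hσ
    have htτ : (Fmod^[k + 1] (toLex (orbitAddr κ z), t)).2 = τ := by
      rw [Fmod_iterate_succ_snd, htσ, ← hστ]; rfl
    refine ⟨t, htτ, fun n hn => ?_⟩
    rcases Nat.le_succ_iff.1 hn with hn | rfl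
    · exact ht n hn
    · rwa [htτ]

/-- `exists_potential_close_of_le` provides `t` for each finite time; compactness of
`[Re z - 1, Re z + 1]` yields one for all times. -/
lemma exists_potential_close (hκ : ‖κ‖ ≤ K) (hz : ∀ n : ℕ, Qconst K + 1 ≤ ((Eexp κ)^[n] z).re) :
    ∃ t, ∀ n, |(Fmod^[n] (toLex (orbitAddr κ z), t)).2 - ((Eexp κ)^[n] z).re| ≤ 1 := by
  obtain ⟨t, -, ht⟩ := IsCompact.exists_mem_forall_mem_of_forall_le
    (isCompact_Icc (a := z.re - 1) (b := z.re + 1))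
    (P := fun n => {t | |(Fmod^[n] (toLex (orbitAddr κ z), t)).2 - ((Eexp κ)^[n] z).re| ≤ 1})
    (fun n => isClosed_le ((continuous_Fmod_iterate_snd _ n).sub continuous_const).abs
      continuous_const) fun k => by
      obtain ⟨t, -, ht⟩ := exists_potential_close_of_le hκ hz k ((Eexp κ)^[k] z).re (by simp)
      have h0 := abs_le.1 (ht 0 k.zero_le)
      simp only [Function.iterate_zero_apply] at h0
      exact ⟨t, ⟨by linarith, by linarith⟩, ht⟩
  exact ⟨t, ht⟩

lemma norm_log_sub_orbit_le (hκ : ‖κ‖ ≤ K) (hz : ∀ n : ℕ, Qconst K + 1 ≤ ((Eexp κ)^[n] z).re)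
    (n : ℕ) {w : ℂ} (hw : ‖w - (Eexp κ)^[n + 1] z‖ ≤ π + 1) :
    ‖Complex.log (w - κ) + 2 * π * Complex.I * orbitAddr κ z n - (Eexp κ)^[n] z‖ ≤
      ‖w - (Eexp κ)^[n + 1] z‖ / 2 := by
  set b := (Eexp κ)^[n + 1] z - κ with hb_def
  set d := w - (Eexp κ)^[n + 1] z with hd_def
  have hbd : b + d = w - κ := by rw [hb_def, hd_def]; ring
  have hlog_b : Complex.log b = (Eexp κ)^[n] z - 2 * π * Complex.I * orbitAddr κ z n :=
    log_orbit_succ_sub hκ hz n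
  have hb_norm : ‖b‖ = exp ((Eexp κ)^[n] z).re := by
    rw [hb_def, Eexp_iterate_succ, add_sub_cancel_right, Complex.norm_exp]
  have hb_arg : |b.arg| ≤ π - 1 / 2 := by
    rw [← Complex.log_im, hlog_b]
    simpa using abs_im_orbit_sub_le hκ hz n
  have hb_big := ten_mul_le_exp_re_orbit hκ hz n
  have hb_pos : 0 < ‖b‖ := by linarith [norm_nonneg κ, pi_pos]
  rw [show Complex.log (w - κ) + 2 * π * Complex.I * orbitAddr κ z n - (Eexp κ)^[n] z =
    Complex.log (b + d) - Complex.log b by rw [hbd, hlog_b]; ring]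
  calc ‖Complex.log (b + d) - Complex.log b‖ ≤ 3 / 2 * ‖d‖ / ‖b‖ :=
        norm_log_add_sub_log_le hb_arg (by linarith [norm_nonneg κ])
    _ ≤ ‖d‖ / 2 := by
        rw [div_le_div_iff₀ hb_pos two_pos]; nlinarith [norm_nonneg d, norm_nonneg κ, pi_pos]

lemma norm_gmap_Fmod_iterate_sub_le (hκ : ‖κ‖ ≤ K)
    (hz : ∀ n : ℕ, Qconst K + 1 ≤ ((Eexp κ)^[n] z).re) {t : ℝ}
    (ht : ∀ n, |(Fmod^[n] (toLex (orbitAddr κ z), t)).2 - ((Eexp κ)^[n] z).re| ≤ 1) (j n : ℕ) :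
    ‖gmap κ j (Fmod^[n] (toLex (orbitAddr κ z), t)) - (Eexp κ)^[n] z‖ ≤ (π + 1) * (1 / 2) ^ j := by
  induction j generalizing n with
  | zero =>
    have hre : (gmap κ 0 (Fmod^[n] (toLex (orbitAddr κ z), t)) - (Eexp κ)^[n] z).re =
        (Fmod^[n] (toLex (orbitAddr κ z), t)).2 - ((Eexp κ)^[n] z).re := by
      simp [gmap, Zc]
    have him : (gmap κ 0 (Fmod^[n] (toLex (orbitAddr κ z), t)) - (Eexp κ)^[n] z).im =
        -(((Eexp κ)^[n] z).im - 2 * π * orbitAddr κ z n) := by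
      simp only [gmap, Zc, ofLex_Fmod_iterate_fst, zero_add]
      simp
    have hround : |((Eexp κ)^[n] z).im - 2 * π * orbitAddr κ z n| ≤ π :=
      abs_sub_two_pi_mul_round_le _
    refine (Complex.norm_le_abs_re_add_abs_im _).trans ?_
    rw [hre, him, abs_neg]
    linarith [ht n]
  | succ j ih =>
    have hpow : (1 / 2 : ℝ) ^ j ≤ 1 := pow_le_one₀ (by norm_num) (by norm_num)
    have hd := ih (n + 1)
    rw [gmap_succ_Fmod_iterate, ofLex_toLex]
    calc _ ≤ ‖gmap κ j (Fmod^[n + 1] (toLex (orbitAddr κ z), t)) - (Eexp κ)^[n + 1] z‖ / 2 :=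
          norm_log_sub_orbit_le hκ hz n (hd.trans (by nlinarith [pi_pos]))
      _ ≤ (π + 1) * (1 / 2) ^ (j + 1) := by rw [pow_succ]; linarith

end Orbit

theorem points_in_image_of_gmap_general (κ : ℂ) (K : ℝ)
    (hκ : ‖κ‖ ≤ K) (g : Addr × ℝ → ℂ)
    (hg : TendstoUniformlyOn (gmap κ) g atTop (Yset (Qconst K)))
    (z : ℂ) (hz : ∀ n : ℕ, Qconst K + 1 ≤ ((Eexp κ)^[n] z).re) :
    ∃ (s : Addr) (t : ℝ), 0 ≤ t ∧ (s, t) ∈ Yset (Qconst K) ∧ g (s, t) = z ∧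
      ∀ n : ℕ, 1 ≤ n →
        ((Eexp κ)^[n - 1] z).im ∈
          Set.Ioo ((2 * ((ofLex s (n - 1) : ℤ) : ℝ) - 1) * Real.pi)
                  ((2 * ((ofLex s (n - 1) : ℤ) : ℝ) + 1) * Real.pi) := by
  obtain ⟨t, ht⟩ := exists_potential_close hκ hz
  have hQ : ∀ n, Qconst K ≤ (Fmod^[n] (toLex (orbitAddr κ z), t)).2 := fun n => by
    linarith [abs_le.1 (ht n), hz n]
  have hQ_nonneg : 0 ≤ Qconst K := by linarith [pi_add_two_le_Qconst K, pi_pos]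
  have hY : (toLex (orbitAddr κ z), t) ∈ Yset (Qconst K) := ⟨fun n => hQ_nonneg.trans (hQ n), hQ⟩
  have hgz : Tendsto (fun j => gmap κ j (toLex (orbitAddr κ z), t)) atTop (𝓝 z) := by
    rw [tendsto_iff_norm_sub_tendsto_zero]
    refine squeeze_zero (fun _ => norm_nonneg _)
      (fun j => norm_gmap_Fmod_iterate_sub_le hκ hz ht j 0) ?_
    simpa using (tendsto_pow_atTop_nhds_zero_of_lt_one (r := (1 / 2 : ℝ)) (by norm_num)
      (by norm_num)).const_mul (π + 1)
  refine ⟨_, t, hQ_nonneg.trans (hQ 0), hY, tendsto_nhds_unique (hg.tendsto_at hY) hgz,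
    fun n _ => ?_⟩
  have h := abs_le.1 (abs_im_orbit_sub_le hκ hz (n - 1))
  constructor <;> simp only [ofLex_toLex] <;> linarith [pi_gt_three]

/-- **Points in the image of `𝔤`** (Theorem 4.4): if the whole orbit of `z` under `E_κ`
stays in the half-plane `{Re ≥ Q + 1}`, then `z = 𝔤(s,t)` for some `(s,t) ∈ Y`; in
particular `z` has external address `s`. -/
theorem points_in_image_of_gmap (κ : ℂ) (K : ℝ) (hK : 2 * Real.pi + 6 < K)
    (hκ : ‖κ‖ ≤ K) (g : Addr × ℝ → ℂ)
    (hg : TendstoUniformlyOn (gmap κ) g atTop (Yset (Qconst K)))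
    (hconj : ∀ p ∈ Yset (Qconst K), g (Fmod p) = Eexp κ (g p))
    (z : ℂ) (hz : ∀ n : ℕ, Qconst K + 1 ≤ ((Eexp κ)^[n] z).re) :
    ∃ (s : Addr) (t : ℝ), 0 ≤ t ∧ (s, t) ∈ Yset (Qconst K) ∧ g (s, t) = z ∧
      ∀ n : ℕ, 1 ≤ n →
        ((Eexp κ)^[n - 1] z).im ∈
          Set.Ioo ((2 * ((ofLex s (n - 1) : ℤ) : ℝ) - 1) * Real.pi)
                  ((2 * ((ofLex s (n - 1) : ℤ) : ℝ) + 1) * Real.pi) :=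
  points_in_image_of_gmap_general κ K hκ g hg z hz
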